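/- arXiv:2101.01869 — 5 statements merged into one kernel-verified Lean document; each statement's English description precedes it below -/
import Mathlib

section
/- For every real number m ≥ 2 there exists a twice continuously differentiable function φ : ℝ → ℝ such that: (1) φ(0) = φ'(0) = 0; (2) φ(−x) = φ(x) for all x ∈ ℝ; (3) φ''(x) = 0 for all x outside [−2/m, −1/m²] ∪ [1/m², 2/m]; (4) 0 ≤ φ''(x)·|x| ≤ 1/log m for all x ∈ ℝ; (5) the integral of φ'' over [1/m², 2/m] equals 1. -/
/-!
Take `φ'' = ψ` with `ψ x = ρ |x| / (|x| log (c / a))` for `a = 1/m²`, `c = 1/m`, where `ρ` is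
the continuous trapezoid rising linearly on `[a, 2a]`, equal to `1` on `[2a, c]` and falling
linearly on `[c, 2c]`; `2a ≤ c` is exactly `m ≥ 2`. Then `0 ≤ ψ x |x| ≤ 1 / log m` because
`0 ≤ ρ ≤ 1`, and `∫ ρ(x)/x dx = log (c / a)` because the two ramps contribute `1 - log 2` and
`2 log 2 - 1`, making up for the `log 2` the plateau misses. Integrating the continuous, even `ψ`
twice from `0` gives an even `C²` function with `φ(0) = φ'(0) = 0`.
-/

open Real MeasureTheory intervalIntegral

noncomputable def trapezoid (a c x : ℝ) : ℝ := max 0 (min 1 (min (x / a - 1) (2 - x / c)))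

section Trapezoid

variable {a c x : ℝ}

theorem trapezoid_nonneg : 0 ≤ trapezoid a c x := le_max_left _ _

theorem trapezoid_le_one : trapezoid a c x ≤ 1 := max_le zero_le_one (min_le_left _ _)

theorem continuous_trapezoid : Continuous (trapezoid a c) := by unfold trapezoid; fun_prop

theorem trapezoid_of_le_left (ha : 0 < a) (hx : x ≤ a) : trapezoid a c x = 0 := by
  have : x / a ≤ 1 := (div_le_one ha).2 hx
  unfold trapezoid; grind

theorem trapezoid_of_right_le (hc : 0 < c) (hx : 2 * c ≤ x) : trapezoid a c x = 0 := by
  have : 2 ≤ x / c := (le_div_iff₀ hc).2 (by linarith)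
  unfold trapezoid; grind

theorem trapezoid_of_mem_rise (ha : 0 < a) (hac : 2 * a ≤ c) (h₁ : a ≤ x) (h₂ : x ≤ 2 * a) :
    trapezoid a c x = x / a - 1 := by
  have : 1 ≤ x / a := (one_le_div ha).2 h₁
  have : x / a ≤ 2 := (div_le_iff₀ ha).2 (by linarith)
  have : x / c ≤ 1 := (div_le_one (by linarith)).2 (by linarith)
  unfold trapezoid; grind

theorem trapezoid_of_mem_plateau (ha : 0 < a) (h₁ : 2 * a ≤ x) (h₂ : x ≤ c) :
    trapezoid a c x = 1 := by
  have : 2 ≤ x / a := (le_div_iff₀ ha).2 (by linarith)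
  have : x / c ≤ 1 := (div_le_one (by linarith)).2 h₂
  unfold trapezoid; grind

theorem trapezoid_of_mem_fall (ha : 0 < a) (hac : 2 * a ≤ c) (h₁ : c ≤ x) (h₂ : x ≤ 2 * c) :
    trapezoid a c x = 2 - x / c := by
  have hc : 0 < c := by linarith
  have : 1 ≤ x / c := (one_le_div hc).2 h₁
  have : x / c ≤ 2 := (div_le_iff₀ hc).2 (by linarith)
  have : 2 ≤ x / a := (le_div_iff₀ ha).2 (by linarith)
  unfold trapezoid; grind

theorem continuous_trapezoid_div (ha : 0 < a) : Continuous fun x => trapezoid a c x / x := by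
  -- `trapezoid a c` vanishes on `x ≤ a`, so the denominator may be replaced by `max x a > 0`.
  have h : (fun x => trapezoid a c x / x) = fun x => trapezoid a c x / max x a := by
    funext x
    rcases le_total x a with hx | hx
    · simp [trapezoid_of_le_left ha hx]
    · rw [max_eq_left hx]
  rw [h]
  exact continuous_trapezoid.div (continuous_id.max continuous_const)
    fun x => (ha.trans_le (le_max_right x a)).ne'

theorem integral_trapezoid_div (ha : 0 < a) (hac : 2 * a ≤ c) :
    ∫ x in a..2 * c, trapezoid a c x / x = log (c / a) := by
  have hc : 0 < c := by linarith
  have hinv {b d : ℝ} (hb : 0 < b) (hd : 0 < d) : IntervalIntegrable (·⁻¹) volume b d :=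
    intervalIntegrable_inv_iff.2 (Or.inr (Set.notMem_uIcc_of_lt hb hd))
  have rise : ∫ x in a..2 * a, trapezoid a c x / x = 1 - log 2 := by
    rw [integral_congr (g := fun x => a⁻¹ - x⁻¹) fun x hx => ?_]
    · rw [integral_sub intervalIntegrable_const (hinv ha (by positivity)),
        intervalIntegral.integral_const, integral_inv_of_pos ha (by positivity),
        mul_div_cancel_right₀ _ ha.ne', smul_eq_mul]
      field_simp
      ring
    · rw [Set.uIcc_of_le (by linarith)] at hx
      dsimp only
      rw [trapezoid_of_mem_rise ha hac hx.1 hx.2]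
      field_simp [(ha.trans_le hx.1).ne']
  have plateau : ∫ x in 2 * a..c, trapezoid a c x / x = log (c / a) - log 2 := by
    rw [integral_congr (g := fun x => x⁻¹) fun x hx => ?_]
    · rw [integral_inv_of_pos (by positivity) hc, div_mul_eq_div_div_swap,
        log_div (by positivity) two_ne_zero]
    · rw [Set.uIcc_of_le hac] at hx
      dsimp only
      rw [trapezoid_of_mem_plateau ha hx.1 hx.2, one_div]
  have fall : ∫ x in c..2 * c, trapezoid a c x / x = 2 * log 2 - 1 := by
    rw [integral_congr (g := fun x => 2 * x⁻¹ - c⁻¹) fun x hx => ?_]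
    · rw [integral_sub ((hinv hc (by positivity)).const_mul 2) intervalIntegrable_const,
        intervalIntegral.integral_const_mul, intervalIntegral.integral_const,
        integral_inv_of_pos hc (by positivity), mul_div_cancel_right₀ _ hc.ne', smul_eq_mul]
      field_simp
      ring
    · rw [Set.uIcc_of_le (by linarith)] at hx
      dsimp only
      rw [trapezoid_of_mem_fall ha hac hx.1 hx.2]
      field_simp [(hc.trans_le hx.1).ne']
  have hint {b d : ℝ} : IntervalIntegrable (fun x => trapezoid a c x / x) volume b d :=
    (continuous_trapezoid_div ha).intervalIntegrable b d
  rw [← integral_add_adjacent_intervals (b := c) hint hint,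
    ← integral_add_adjacent_intervals (b := 2 * a) hint hint, rise, plateau, fall]
  ring

end Trapezoid

theorem integral_zero_neg (f : ℝ → ℝ) (x : ℝ) :
    ∫ t in (0 : ℝ)..-x, f t = -∫ t in (0 : ℝ)..x, f (-t) := by
  rw [integral_symm, integral_comp_neg, neg_zero]

theorem Function.Even.integral_zero_odd {f : ℝ → ℝ} (hf : f.Even) :
    (fun x => ∫ t in (0 : ℝ)..x, f t).Odd := fun x => by
  simp only [integral_zero_neg, hf _]

theorem Function.Odd.integral_zero_even {f : ℝ → ℝ} (hf : f.Odd) :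
    (fun x => ∫ t in (0 : ℝ)..x, f t).Even := fun x => by
  simp only [integral_zero_neg, hf _, intervalIntegral.integral_neg, neg_neg]

theorem contDiff_intervalIntegral {f : ℝ → ℝ} {n : ℕ} (hf : ContDiff ℝ n f) (a : ℝ) :
    ContDiff ℝ (n + 1) fun x => ∫ t in a..x, f t := by
  refine contDiff_succ_iff_deriv.2 ⟨fun x => ?_, by simp, ?_⟩
  · exact (hf.continuous.integral_hasStrictDerivAt a x).hasDerivAt.differentiableAt
  · rwa [funext (hf.continuous.deriv_integral f a)]

noncomputable def ywKernel (a c x : ℝ) : ℝ := trapezoid a c |x| / (|x| * log (c / a))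

section Kernel

variable {a c : ℝ}

theorem continuous_ywKernel (ha : 0 < a) : Continuous (ywKernel a c) := by
  have h : ywKernel a c = fun x => trapezoid a c |x| / |x| / log (c / a) := by
    funext x; rw [ywKernel, div_div]
  rw [h]
  exact ((continuous_trapezoid_div ha).comp continuous_abs).div_const _

theorem ywKernel_even : (ywKernel a c).Even := fun x => by simp [ywKernel]

theorem ywKernel_eq_zero (ha : 0 < a) (hc : 0 < c) {x : ℝ}
    (hx : x ∉ Set.Icc (-(2 * c)) (-a) ∪ Set.Icc a (2 * c)) : ywKernel a c x = 0 := by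
  have : |x| ≤ a ∨ 2 * c ≤ |x| := by
    simp only [Set.mem_union, Set.mem_Icc, not_or, not_and_or, not_le] at hx
    cases abs_cases x <;> grind
  rcases this with h | h
  · simp [ywKernel, trapezoid_of_le_left ha h]
  · simp [ywKernel, trapezoid_of_right_le hc h]

theorem ywKernel_mul_abs (ha : 0 < a) (x : ℝ) :
    ywKernel a c x * |x| = trapezoid a c |x| / log (c / a) := by
  rcases eq_or_ne x 0 with rfl | hx
  · simp [trapezoid_of_le_left ha ha.le]
  · unfold ywKernel
    field_simp [abs_ne_zero.2 hx]

theorem integral_ywKernel (ha : 0 < a) (hac : 2 * a ≤ c) :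
    ∫ x in a..2 * c, ywKernel a c x = 1 := by
  have hlog : 0 < log (c / a) := log_pos ((one_lt_div ha).2 (by linarith))
  have h : Set.EqOn (ywKernel a c) (fun x => trapezoid a c x / x / log (c / a))
      (Set.uIcc a (2 * c)) := fun x hx => by
    rw [Set.uIcc_of_le (by linarith)] at hx
    rw [ywKernel, abs_of_pos (ha.trans_le hx.1), ← div_div]
  rw [integral_congr h, intervalIntegral.integral_div, integral_trapezoid_div ha hac,
    div_self hlog.ne']

end Kernel

/-- For every real `m ≥ 2` there exists a Yamada–Watanabe function of order `m`:
a `C²` function `φ` with `φ(0) = φ'(0) = 0`, `φ` even, `φ''` supported in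
`[-2/m, -1/m²] ∪ [1/m², 2/m]`, `0 ≤ φ''(x)|x| ≤ 1/log m`, and
`∫_{1/m²}^{2/m} φ'' = 1`. -/
theorem exists_yamada_watanabe_function (m : ℝ) (hm : 2 ≤ m) :
    ∃ φ : ℝ → ℝ, ContDiff ℝ 2 φ ∧
      φ 0 = 0 ∧ deriv φ 0 = 0 ∧
      (∀ x : ℝ, φ (-x) = φ x) ∧
      (∀ x : ℝ, x ∉ Set.Icc (-(2 / m)) (-(1 / m ^ 2)) ∪ Set.Icc (1 / m ^ 2) (2 / m) →
        deriv (deriv φ) x = 0) ∧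
      (∀ x : ℝ, 0 ≤ deriv (deriv φ) x * |x| ∧ deriv (deriv φ) x * |x| ≤ 1 / Real.log m) ∧
      ∫ x in (1 / m ^ 2)..(2 / m), deriv (deriv φ) x = 1 := by
  have hm0 : 0 < m := by linarith
  have ha : (0 : ℝ) < 1 / m ^ 2 := by positivity
  have hc : (0 : ℝ) < 1 / m := by positivity
  have hac : 2 * (1 / m ^ 2) ≤ 1 / m := by
    rw [← mul_div_assoc, div_le_div_iff₀ (by positivity) hm0]; nlinarith
  have h2c : 2 * (1 / m) = 2 / m := mul_one_div 2 m
  have hlog : log ((1 / m) / (1 / m ^ 2)) = log m := by congr 1; field_simp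
  set ψ := ywKernel (1 / m ^ 2) (1 / m)
  have hψ : Continuous ψ := continuous_ywKernel ha
  have hG : ContDiff ℝ 1 fun y => ∫ z in (0 : ℝ)..y, ψ z :=
    contDiff_intervalIntegral (contDiff_zero.2 hψ) 0
  have hψ₂ : deriv (deriv fun x => ∫ y in (0 : ℝ)..x, ∫ z in (0 : ℝ)..y, ψ z) = ψ := by
    rw [funext (hG.continuous.deriv_integral _ 0)]
    exact funext (hψ.deriv_integral ψ 0)
  refine ⟨fun x => ∫ y in (0 : ℝ)..x, ∫ z in (0 : ℝ)..y, ψ z,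
    contDiff_intervalIntegral hG 0, by simp, ?_,
    (ywKernel_even.integral_zero_odd).integral_zero_even, fun x hx => ?_, fun x => ?_, ?_⟩
  · rw [hG.continuous.deriv_integral _ 0]; simp
  · rw [hψ₂]; exact ywKernel_eq_zero ha hc (by rwa [h2c])
  · rw [hψ₂, ywKernel_mul_abs ha, hlog]
    exact ⟨div_nonneg trapezoid_nonneg (log_nonneg (by linarith)),
      div_le_div_of_nonneg_right trapezoid_le_one (log_nonneg (by linarith))⟩
  · rw [hψ₂, ← h2c]; exact integral_ywKernel ha hac
end

section
/- Let m ≥ 2 and let φ : ℝ → ℝ be a Yamada–Watanabe function of order m, i.e. φ is twice continuously differentiable with (1) φ(0) = φ'(0) = 0; (2) φ(−x) = φ(x) for all x; (3) φ''(x) = 0 for all x outside [−2/m, −1/m²] ∪ [1/m², 2/m]; (4) 0 ≤ φ''(x)·|x| ≤ 1/log m for all x; (5) the integral of φ'' over [1/m², 2/m] equals 1. Then |x| − 2/m ≤ φ(x) ≤ |x| for all x ∈ ℝ. -/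
/-!
Since `φ'' ≥ 0` vanishes on `(0, 1/m²)` and beyond `2/m` and has integral `1` over
`[1/m², 2/m]`, the derivative `φ'` increases on `[0, ∞)` from `φ'(0) = 0` to the value `1`,
which it keeps from `2/m` on. Integrating `0 ≤ φ' ≤ 1` from `0` gives `0 ≤ φ(x) ≤ x`, and
`φ' = 1` past `2/m` gives `φ(x) ≥ x - 2/m`; evenness transfers both bounds to `x < 0`.
-/

open Real MeasureTheory intervalIntegral Set

theorem intervalIntegral.integral_eq_of_eq_zero_of_mem_Icc_diff {f : ℝ → ℝ} {a b c d : ℝ}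
    (hca : c ≤ a) (hab : a ≤ b) (hbd : b ≤ d) (hf : ∀ t ∈ Icc c d \ Icc a b, f t = 0) :
    ∫ t in c..d, f t = ∫ t in a..b, f t := by
  rw [integral_of_le (hca.trans (hab.trans hbd)), integral_of_le hab,
    ← integral_Icc_eq_integral_Ioc, ← integral_Icc_eq_integral_Ioc]
  exact setIntegral_eq_of_subset_of_forall_sdiff_eq_zero measurableSet_Icc
    (Icc_subset_Icc hca hbd) hf

theorem sub_eq_integral_deriv_of_deriv_eq_zero_of_mem_Icc_diff {f : ℝ → ℝ}
    (hf : Differentiable ℝ f) (hf' : Continuous (deriv f)) {a b c d : ℝ}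
    (hca : c ≤ a) (hab : a ≤ b) (hbd : b ≤ d)
    (h : ∀ t ∈ Icc c d \ Icc a b, deriv f t = 0) :
    f d - f c = ∫ t in a..b, deriv f t := by
  rw [← integral_deriv_eq_sub (fun t _ => hf t) (hf'.intervalIntegrable _ _)]
  exact integral_eq_of_eq_zero_of_mem_Icc_diff hca hab hbd h

section BoundsFromDeriv

variable {g : ℝ → ℝ} (hg : Differentiable ℝ g) (hg0 : g 0 = 0)
include hg hg0

theorem le_self_of_deriv_le_one (hle : ∀ x, 0 ≤ x → deriv g x ≤ 1) {x : ℝ}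
    (hx : 0 ≤ x) : g x ≤ x := by
  have := (convex_Ici 0).image_sub_le_mul_sub_of_deriv_le hg.continuous.continuousOn
    hg.differentiableOn (by simpa using fun y hy => hle y hy.le) 0 self_mem_Ici x hx hx
  linarith

theorem sub_le_of_one_le_deriv {b : ℝ} (hb : 0 ≤ b)
    (hnonneg : ∀ x, 0 ≤ x → 0 ≤ deriv g x) (hone : ∀ x, b ≤ x → 1 ≤ deriv g x)
    {x : ℝ} (hx : 0 ≤ x) : x - b ≤ g x := by
  have hincr := (convex_Ici 0).mul_sub_le_image_sub_of_le_deriv (C := 0)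
    hg.continuous.continuousOn hg.differentiableOn
    (by simpa using fun y hy => hnonneg y hy.le)
  rcases le_total x b with hxb | hbx
  · linarith [hincr 0 self_mem_Ici x hx hx]
  · have hslope := (convex_Ici b).mul_sub_le_image_sub_of_le_deriv
      hg.continuous.continuousOn hg.differentiableOn
      (by simpa using fun y hy => hone y hy.le) b self_mem_Ici x hbx hbx
    linarith [hincr 0 self_mem_Ici b hb hb]

end BoundsFromDeriv

/-- A Yamada–Watanabe function of order `m ≥ 2` satisfies `|x| - 2/m ≤ φ(x) ≤ |x|`. -/
theorem yamada_watanabe_abs_bounds (m : ℝ) (hm : 2 ≤ m) (φ : ℝ → ℝ)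
    (hC2 : ContDiff ℝ 2 φ)
    (h0 : φ 0 = 0) (h0' : deriv φ 0 = 0)
    (heven : ∀ x : ℝ, φ (-x) = φ x)
    (hsupp : ∀ x : ℝ,
      x ∉ Set.Icc (-(2 / m)) (-(1 / m ^ 2)) ∪ Set.Icc (1 / m ^ 2) (2 / m) →
      deriv (deriv φ) x = 0)
    (hbound : ∀ x : ℝ,
      0 ≤ deriv (deriv φ) x * |x| ∧ deriv (deriv φ) x * |x| ≤ 1 / Real.log m)
    (hint : ∫ x in (1 / m ^ 2)..(2 / m), deriv (deriv φ) x = 1) :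
    ∀ x : ℝ, |x| - 2 / m ≤ φ x ∧ φ x ≤ |x| := by
  have ha : 0 < 1 / m ^ 2 := by positivity
  have hab : 1 / m ^ 2 ≤ 2 / m := by
    rw [div_le_div_iff₀ (by positivity) (by positivity)]; nlinarith
  have hφ := hC2.differentiable two_ne_zero
  have hφ' : Differentiable ℝ (deriv φ) :=
    (hC2.iterate_deriv' 1 1).differentiable one_ne_zero
  have hφ'' : Continuous (deriv (deriv φ)) := (hC2.iterate_deriv' 0 2).continuous
  have hsupp_nonneg : ∀ t, 0 ≤ t → t ∉ Icc (1 / m ^ 2) (2 / m) → deriv (deriv φ) t = 0 :=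
    fun t ht hnot => hsupp t (by
      simp only [mem_union, not_or]
      exact ⟨fun h => by linarith [h.2], hnot⟩)
  have hφ''_nonneg : ∀ x, 0 ≤ deriv (deriv φ) x := fun x => by
    rcases eq_or_ne x 0 with rfl | hx
    · exact (hsupp_nonneg 0 le_rfl fun h => by linarith [h.1]).ge
    · exact (mul_nonneg_iff_of_pos_right (abs_pos.mpr hx)).mp (hbound x).1
  have hmono : Monotone (deriv φ) := monotone_of_deriv_nonneg hφ' hφ''_nonneg
  have hone : ∀ x, 2 / m ≤ x → deriv φ x = 1 := fun x hx => by
    have := sub_eq_integral_deriv_of_deriv_eq_zero_of_mem_Icc_diff hφ' hφ'' ha.le hab hx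
      fun t ht => hsupp_nonneg t ht.1.1 ht.2
    rwa [h0', sub_zero, hint] at this
  have hφ'_le_one : ∀ x, deriv φ x ≤ 1 := fun x =>
    hone _ (le_max_right x _) ▸ hmono (le_max_left x _)
  have key : ∀ x, 0 ≤ x → x - 2 / m ≤ φ x ∧ φ x ≤ x := fun x hx =>
    ⟨sub_le_of_one_le_deriv hφ h0 (by positivity) (fun y hy => h0' ▸ hmono hy)
      (fun y hy => (hone y hy).ge) hx,
    le_self_of_deriv_le_one hφ h0 (fun y _ => hφ'_le_one y) hx⟩
  intro x
  have hφ_abs : φ |x| = φ x := by rcases abs_choice x with h | h <;> rw [h]; exact heven x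
  exact hφ_abs ▸ key |x| (abs_nonneg x)
end

section
/- Let a, σ, T > 0, set γ = √(a² + 2σ²), and for t ∈ [0,T] define D(t) = (γ − a) + (γ + a)·exp(γ(T − t)) and B(t) = 2(1 − exp(γ(T − t)))/D(t). Then D(t) ≥ 2γ > 0 for all t ∈ [0,T], B(T) = 0, B is differentiable on [0,T], and B satisfies the Riccati equation B'(t) = a·B(t) − (σ²/2)·B(t)² + 1 for all t ∈ [0,T]. -/
open Real

/-!
Write `E t = exp (γ (T - t))`, so that `E' = -γ E` and `B = 2 (1 - E) / ((γ - a) + (γ + a) E)`.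
By the quotient rule `B'` is a rational function of `E`, and the Riccati equation becomes a
polynomial identity in `E` which holds precisely because `γ² = a² + 2σ²`. The lower bound
`D ≥ 2γ` is `E ≥ 1` for `t ≤ T`, together with `γ + a ≥ 0`.
-/

section CIR

variable {a σ γ T : ℝ}

lemma two_mul_le_sub_add_mul_exp (hγa : -a ≤ γ) {x : ℝ} (hx : 0 ≤ x) :
    2 * γ ≤ (γ - a) + (γ + a) * exp x := by
  nlinarith [one_le_exp hx]

lemma hasDerivAt_exp_mul_sub (γ T t : ℝ) :
    HasDerivAt (fun s => exp (γ * (T - s))) (exp (γ * (T - t)) * -γ) t := by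
  simpa using (((hasDerivAt_id t).const_sub T).const_mul γ).exp

-- The left side is the quotient rule's output verbatim; the denominator is kept abstract as `d`
-- so that `field_simp` can clear it.
lemma cir_riccati_identity (hγ : γ ^ 2 = a ^ 2 + 2 * σ ^ 2) {E d : ℝ}
    (hd_def : (γ - a) + (γ + a) * E = d) (hd : d ≠ 0) :
    (2 * -(E * -γ) * d - 2 * (1 - E) * ((γ + a) * (E * -γ))) / d ^ 2 =
      a * (2 * (1 - E) / d) - σ ^ 2 / 2 * (2 * (1 - E) / d) ^ 2 + 1 := by
  field_simp
  subst hd_def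
  linear_combination -(1 - E) ^ 2 * hγ

lemma hasDerivAt_cir_B (hγ : γ ^ 2 = a ^ 2 + 2 * σ ^ 2) {t : ℝ}
    (hd : (γ - a) + (γ + a) * exp (γ * (T - t)) ≠ 0) :
    let B := fun s => 2 * (1 - exp (γ * (T - s))) / ((γ - a) + (γ + a) * exp (γ * (T - s)))
    HasDerivAt B (a * B t - σ ^ 2 / 2 * B t ^ 2 + 1) t := by
  have hE := hasDerivAt_exp_mul_sub γ T t
  have hquot := ((hE.const_sub 1).const_mul 2).div ((hE.const_mul (γ + a)).const_add (γ - a)) hd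
  rw [cir_riccati_identity hγ rfl hd] at hquot
  exact hquot

end CIR

theorem cir_B_riccati_general (a σ T : ℝ) (ha : 0 < a)
    (γ : ℝ) (hγ : γ = Real.sqrt (a ^ 2 + 2 * σ ^ 2))
    (D B : ℝ → ℝ)
    (hD : ∀ t, D t = (γ - a) + (γ + a) * Real.exp (γ * (T - t)))
    (hB : ∀ t, B t = 2 * (1 - Real.exp (γ * (T - t))) / D t) :
    (∀ t ∈ Set.Icc (0 : ℝ) T, 2 * γ ≤ D t) ∧ 0 < 2 * γ ∧
    B T = 0 ∧
    (∀ t ∈ Set.Icc (0 : ℝ) T,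
      HasDerivAt B (a * B t - σ ^ 2 / 2 * B t ^ 2 + 1) t) := by
  have hγ_sq : γ ^ 2 = a ^ 2 + 2 * σ ^ 2 := hγ ▸ sq_sqrt (by positivity)
  have hγ_pos : 0 < γ := hγ ▸ sqrt_pos.mpr (by positivity)
  have hD_ge : ∀ t ∈ Set.Icc (0 : ℝ) T, 2 * γ ≤ D t := fun t ht =>
    hD t ▸ two_mul_le_sub_add_mul_exp (by linarith) (by nlinarith [ht.2])
  refine ⟨hD_ge, by linarith, by simp [hB], fun t ht => ?_⟩
  have hB_eq : B = fun s =>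
      2 * (1 - exp (γ * (T - s))) / ((γ - a) + (γ + a) * exp (γ * (T - s))) := by
    funext s; rw [hB, hD]
  rw [hB_eq]
  exact hasDerivAt_cir_B hγ_sq (hD t ▸ (hD_ge t ht).trans_lt' (by linarith)).ne'

/-- Properties of the exponent function `B` in the closed-form CIR bond price:
with `γ = √(a² + 2σ²)`, `D t = (γ - a) + (γ + a)·exp(γ(T - t))` and
`B t = 2(1 - exp(γ(T - t)))/D t`, we have `D ≥ 2γ > 0` on `[0,T]`, `B T = 0`,
and `B` solves the Riccati equation `B' = a·B - (σ²/2)·B² + 1` on `[0,T]`. -/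
theorem cir_B_riccati (a σ T : ℝ) (ha : 0 < a) (hσ : 0 < σ) (hT : 0 < T)
    (γ : ℝ) (hγ : γ = Real.sqrt (a ^ 2 + 2 * σ ^ 2))
    (D B : ℝ → ℝ)
    (hD : ∀ t, D t = (γ - a) + (γ + a) * Real.exp (γ * (T - t)))
    (hB : ∀ t, B t = 2 * (1 - Real.exp (γ * (T - t))) / D t) :
    (∀ t ∈ Set.Icc (0 : ℝ) T, 2 * γ ≤ D t) ∧ 0 < 2 * γ ∧
    B T = 0 ∧
    (∀ t ∈ Set.Icc (0 : ℝ) T,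
      HasDerivAt B (a * B t - σ ^ 2 / 2 * B t ^ 2 + 1) t) :=
  cir_B_riccati_general a σ T ha γ hγ D B hD hB
end

section
/- Let a, b, σ, T > 0, set γ = √(a² + 2σ²), and for t ∈ [0,T] define D(t) = (γ − a) + (γ + a)·exp(γ(T − t)), B(t) = 2(1 − exp(γ(T − t)))/D(t), and A(t) = (2γ·exp((γ + a)(T − t)/2)/D(t))^(2ab/σ²). Then A(T) = 1, A is differentiable on [0,T], and A'(t) = −a·b·B(t)·A(t) for all t ∈ [0,T]. -/
open Real

theorem abs_lt_sqrt_sq_add {c : ℝ} (a : ℝ) (hc : 0 < c) : |a| < √(a ^ 2 + c) :=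
  (Real.lt_sqrt (abs_nonneg a)).2 (by rw [sq_abs]; linarith)

theorem HasDerivAt.div_of_hasDerivAt_mul_self {N D : ℝ → ℝ} {α δ t : ℝ}
    (hN : HasDerivAt N (α * N t) t) (hD : HasDerivAt D δ t) (hDt : D t ≠ 0) :
    HasDerivAt (fun s => N s / D s) ((α - δ / D t) * (N t / D t)) t :=
  (hN.div hD hDt).congr_deriv (by field_simp)

theorem HasDerivAt.rpow_const_of_hasDerivAt_mul_self {f : ℝ → ℝ} {l t : ℝ} (p : ℝ)
    (hf : HasDerivAt f (l * f t) t) (hft : f t ≠ 0) :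
    HasDerivAt (fun s => f s ^ p) (p * l * f t ^ p) t :=
  (hf.rpow_const (Or.inl hft)).congr_deriv (by rw [rpow_sub_one hft]; field_simp)

/-- The logarithmic derivative of `A` is `p (N'/N - D'/D)` with `N'/N = -(γ + a)/2`; since
`γ² - a² = 2σ²`, it collapses to `-a b B`. -/
theorem cir_logDeriv_eq {a b σ γ e d : ℝ} (hσ : σ ≠ 0) (hγ : γ ^ 2 = a ^ 2 + 2 * σ ^ 2)
    (hd : d = (γ - a) + (γ + a) * e) (hd0 : d ≠ 0) :
    2 * a * b / σ ^ 2 * (-(γ + a) / 2 - -(γ * (γ + a) * e) / d) =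
      -(a * b * (2 * (1 - e) / d)) := by
  field_simp
  subst hd
  linear_combination a * b * (e - 1) * hγ

theorem cir_A_ode_general (a b σ T : ℝ) (hσ : 0 < σ)
    (γ : ℝ) (hγ : γ = Real.sqrt (a ^ 2 + 2 * σ ^ 2))
    (D B A : ℝ → ℝ)
    (hD : ∀ t, D t = (γ - a) + (γ + a) * Real.exp (γ * (T - t)))
    (hB : ∀ t, B t = 2 * (1 - Real.exp (γ * (T - t))) / D t)
    (hA : ∀ t, A t =
      (2 * γ * Real.exp ((γ + a) * (T - t) / 2) / D t) ^ (2 * a * b / σ ^ 2)) :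
    A T = 1 ∧
    (∀ t ∈ Set.Icc (0 : ℝ) T, HasDerivAt A (-(a * b * B t * A t)) t) := by
  have hγa : |a| < γ := hγ ▸ abs_lt_sqrt_sq_add a (by positivity)
  have hγ2 : γ ^ 2 = a ^ 2 + 2 * σ ^ 2 := hγ ▸ sq_sqrt (by positivity)
  have hγpos : 0 < γ := (abs_nonneg a).trans_lt hγa
  have hDpos : ∀ t, 0 < D t := fun t => hD t ▸ add_pos_of_pos_of_nonneg
    (by linarith [le_abs_self a]) (mul_nonneg (by linarith [neg_abs_le a]) (exp_pos _).le)
  refine ⟨?_, fun t _ => ?_⟩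
  · rw [hA, hD]
    simp only [sub_self, mul_zero, zero_div, exp_zero, mul_one]
    rw [show γ - a + (γ + a) = 2 * γ by ring, div_self (by positivity), one_rpow]
  have hN : HasDerivAt (fun s => 2 * γ * exp ((γ + a) * (T - s) / 2))
      (-(γ + a) / 2 * (2 * γ * exp ((γ + a) * (T - t) / 2))) t :=
    ((((hasDerivAt_id t).const_sub T).const_mul (γ + a)).div_const 2).exp.const_mul (2 * γ)
      |>.congr_deriv (by simp only [id]; ring)
  have hD' : HasDerivAt D (-(γ * (γ + a) * exp (γ * (T - t)))) t := by
    rw [funext hD]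
    exact ((((hasDerivAt_id t).const_sub T).const_mul γ).exp.const_mul (γ + a)).const_add _
      |>.congr_deriv (by simp only [id]; ring)
  have hA' := (hN.div_of_hasDerivAt_mul_self hD' (hDpos t).ne').rpow_const_of_hasDerivAt_mul_self
    (2 * a * b / σ ^ 2) (div_pos (by positivity) (hDpos t)).ne'
  rw [hB, hA, funext hA]
  convert hA' using 1
  rw [cir_logDeriv_eq hσ.ne' hγ2 (hD t) (hDpos t).ne']
  ring

/-- Properties of the coefficient function `A` in the closed-form CIR bond price:
with `γ = √(a² + 2σ²)`, `D t = (γ - a) + (γ + a)·exp(γ(T - t))`,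
`B t = 2(1 - exp(γ(T - t)))/D t` and
`A t = (2γ·exp((γ + a)(T - t)/2)/D t)^(2ab/σ²)`, we have `A T = 1` and
`A' = -a·b·B·A` on `[0,T]`. -/
theorem cir_A_ode (a b σ T : ℝ) (ha : 0 < a) (hb : 0 < b) (hσ : 0 < σ) (hT : 0 < T)
    (γ : ℝ) (hγ : γ = Real.sqrt (a ^ 2 + 2 * σ ^ 2))
    (D B A : ℝ → ℝ)
    (hD : ∀ t, D t = (γ - a) + (γ + a) * Real.exp (γ * (T - t)))
    (hB : ∀ t, B t = 2 * (1 - Real.exp (γ * (T - t))) / D t)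
    (hA : ∀ t, A t =
      (2 * γ * Real.exp ((γ + a) * (T - t) / 2) / D t) ^ (2 * a * b / σ ^ 2)) :
    A T = 1 ∧
    (∀ t ∈ Set.Icc (0 : ℝ) T, HasDerivAt A (-(a * b * B t * A t)) t) :=
  cir_A_ode_general a b σ T hσ γ hγ D B A hD hB hA
end

section
/- Let C > 0, T > 0 and a₀ > 0. For an integer N ≥ 1, set Δt = T/N and define the sequence (a_k)_{0 ≤ k ≤ N} by a_{k+1} = (1 + C·Δt)·a_k + C·Δt·√(a_k) + C·Δt. Then a_N ≤ exp(C·T)·(√(a₀) + C·T·(1 + 1/√(a₀)))². In particular, sup over N ≥ 1 of a_N is bounded by a constant depending only on C, T and a₀. -/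
open Real

/-- Uniform-in-`N` bound on the dominating sequence for the squared moments of the
Euler scheme: with `Δt = T/N`, the sequence `a_{k+1} = (1 + CΔt)a_k + CΔt√(a_k) + CΔt`
satisfies `a_N ≤ exp(CT)(√a₀ + CT(1 + 1/√a₀))²`. -/
theorem euler_moment_uniform_bound (C T a₀ : ℝ) (hC : 0 < C) (hT : 0 < T)
    (ha₀ : 0 < a₀) :
    ∀ N : ℕ, 1 ≤ N → ∀ a : ℕ → ℝ, a 0 = a₀ →
      (∀ k : ℕ, a (k + 1) =
        (1 + C * (T / N)) * a k + C * (T / N) * Real.sqrt (a k) + C * (T / N)) →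
      a N ≤ Real.exp (C * T) *
        (Real.sqrt a₀ + C * T * (1 + 1 / Real.sqrt a₀)) ^ 2 := by
  intro N hN a h0 hrec
  have hN0 : (0:ℝ) < N := by exact_mod_cast hN
  set δ : ℝ := C * (T / N) with hδdef
  have hδ : 0 < δ := by rw [hδdef]; positivity
  have hs0 : 0 < Real.sqrt a₀ := Real.sqrt_pos.mpr ha₀
  set M : ℝ := 1 + 1 / Real.sqrt a₀ with hM
  have hM1 : 1 ≤ M := by
    rw [hM]
    have : 0 < 1 / Real.sqrt a₀ := by positivity
    linarith
  have hM0 : 0 < M := lt_of_lt_of_le one_pos hM1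
  clear_value δ M
  have hmono : ∀ k, a₀ ≤ a k := by
    intro k; induction k with
    | zero => simp [h0]
    | succ k ih =>
      have hak : 0 < a k := lt_of_lt_of_le ha₀ ih
      have hsk : 0 ≤ Real.sqrt (a k) := Real.sqrt_nonneg _
      rw [hrec k]
      nlinarith
  have key : ∀ k : ℕ, a k ≤ (1+δ)^k * (Real.sqrt a₀ + k*δ*M)^2 := by
    intro k; induction k with
    | zero => simp [h0, Real.sq_sqrt ha₀.le]
    | succ k ih =>
      have hak := hmono k
      have hak0 : 0 < a k := lt_of_lt_of_le ha₀ hak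
      have hsk : Real.sqrt a₀ ≤ Real.sqrt (a k) := Real.sqrt_le_sqrt hak
      have hsknn : 0 ≤ Real.sqrt (a k) := Real.sqrt_nonneg _
      have h1 : Real.sqrt (a k) + 1 ≤ M * Real.sqrt (a k) := by
        have hd : 1 ≤ Real.sqrt (a k) / Real.sqrt a₀ := (one_le_div hs0).mpr hsk
        have he : M * Real.sqrt (a k)
            = Real.sqrt (a k) + Real.sqrt (a k) / Real.sqrt a₀ := by
          rw [hM]; field_simp
        linarith
      have hSnn : (0:ℝ) ≤ Real.sqrt a₀ + k*δ*M := by positivity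
      have hpk : (0:ℝ) < (1+δ)^k := by positivity
      have hpk1 : (0:ℝ) < (1+δ)^(k+1) := by positivity
      have h2 : Real.sqrt (a k) ≤ Real.sqrt ((1+δ)^k) * (Real.sqrt a₀ + k*δ*M) := by
        have h := Real.sqrt_le_sqrt ih
        rwa [Real.sqrt_mul (by positivity), Real.sqrt_sq hSnn] at h
      have hone : (1:ℝ) ≤ (1+δ)^k := one_le_pow₀ (by linarith)
      have h3 : Real.sqrt ((1+δ)^k) ≤ (1+δ)^k := by
        have hx : (1+δ)^k ≤ ((1+δ)^k)^2 := by nlinarith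
        have := Real.sqrt_le_sqrt hx
        rwa [Real.sqrt_sq hpk.le] at this
      have e2 : Real.sqrt (a k) ≤ (1+δ)^k * (Real.sqrt a₀ + k*δ*M) :=
        h2.trans (mul_le_mul_of_nonneg_right h3 hSnn)
      have hpow2 : (1+δ)^k ≤ (1+δ)^(k+1) := by rw [pow_succ]; nlinarith
      set S : ℝ := Real.sqrt a₀ + k*δ*M with hS
      -- main chain
      have hA : (1+δ) * a k ≤ (1+δ)^(k+1) * S^2 := by
        calc (1+δ) * a k ≤ (1+δ) * ((1+δ)^k * S^2) := by
              apply mul_le_mul_of_nonneg_left ih (by linarith)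
          _ = (1+δ)^(k+1) * S^2 := by rw [pow_succ]; ring
      have hB : δ * Real.sqrt (a k) + δ ≤ δ * M * ((1+δ)^k * S) := by
        have e1 : δ * Real.sqrt (a k) + δ ≤ δ * (M * Real.sqrt (a k)) := by nlinarith
        have e3 : δ * (M * Real.sqrt (a k)) ≤ δ * M * ((1+δ)^k * S) := by
          have := mul_le_mul_of_nonneg_left e2 (mul_nonneg hδ.le hM0.le)
          linarith [this]
        linarith
      have hC2 : δ * M * ((1+δ)^k * S) ≤ (1+δ)^(k+1) * (2 * (δ*M) * S) := by
        have hnn : 0 ≤ δ * M * S := mul_nonneg (mul_nonneg hδ.le hM0.le) hSnn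
        have h4 := mul_le_mul_of_nonneg_left hpow2 hnn
        have h5 : 0 ≤ δ * M * S * (1+δ)^(k+1) := mul_nonneg hnn hpk1.le
        calc δ * M * ((1+δ)^k * S) = δ * M * S * (1+δ)^k := by ring
          _ ≤ δ * M * S * (1+δ)^(k+1) := h4
          _ ≤ (1+δ)^(k+1) * (2 * (δ*M) * S) := by linarith
      have hD : (0:ℝ) ≤ (1+δ)^(k+1) * (δ*M)^2 := by positivity
      have hgoal : (1+δ) * a k + δ * Real.sqrt (a k) + δ ≤
          (1+δ)^(k+1) * (Real.sqrt a₀ + ((k:ℝ)+1)*δ*M)^2 := by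
        have hfin : (1+δ) * a k + δ * Real.sqrt (a k) + δ ≤
            (1+δ)^(k+1) * S^2 + (1+δ)^(k+1) * (2 * (δ*M) * S)
              + (1+δ)^(k+1) * (δ*M)^2 := by linarith
        calc (1+δ) * a k + δ * Real.sqrt (a k) + δ
            ≤ (1+δ)^(k+1) * S^2 + (1+δ)^(k+1) * (2 * (δ*M) * S)
              + (1+δ)^(k+1) * (δ*M)^2 := hfin
          _ = (1+δ)^(k+1) * (S + δ*M)^2 := by ring
          _ = (1+δ)^(k+1) * (Real.sqrt a₀ + ((k:ℝ)+1)*δ*M)^2 := by simp only [hS]; ring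
      rw [hrec k]
      push_cast
      linarith [hgoal]
  have hNδ : (N:ℝ) * δ = C * T := by
    rw [hδdef]; field_simp
  have hfin := key N
  rw [hNδ] at hfin
  have hexp : (1+δ)^N ≤ Real.exp (C * T) := by
    have h1 : (1+δ) ≤ Real.exp δ := by
      have := Real.add_one_le_exp δ; linarith
    calc (1+δ)^N ≤ (Real.exp δ)^N := pow_le_pow_left₀ (by linarith) h1 N
      _ = Real.exp ((N:ℝ) * δ) := by rw [← Real.exp_nat_mul]
      _ = Real.exp (C * T) := by rw [hNδ]
  calc a N ≤ (1+δ)^N * (Real.sqrt a₀ + C * T * M)^2 := hfin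
    _ ≤ Real.exp (C * T) * (Real.sqrt a₀ + C * T * M)^2 := by
        apply mul_le_mul_of_nonneg_right hexp (by positivity)
end
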